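/- Let β₁, β₂ > 1 be two different non-integers with ν_{β₁} = ν_{β₂}. Then exactly one of the orbits O_{β₁} = {T_{β₁}^n(1) : n ≥ 1} and O_{β₂} = {T_{β₂}^n(1) : n ≥ 1} contains the point 0. -/

import Mathlib

/-!
A Rényi–Parry density `h_β` is antitone and right-continuous, and its jump at `t` is
`J_β(t) = Σ_{T_β^n(1) = t} β^{-n}`. Two such densities that agree almost everywhere on `[0,1)` have
the same one-sided limits, so `ν_{β₁} = ν_{β₂}` forces `K_{β₁} = K_{β₂}` (from the left limit `1`
at `t = 1`), `h_{β₁} = h_{β₂}` on `[0,1)` and `J_{β₁} = J_{β₂}` on `(0,1)`.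

If neither orbit reaches `0`, then `h_β(0) = Σ β^{-n} = (1 - β⁻¹)⁻¹` determines `β`. If both do,
an orbit that reaches `0` passes through every nonzero value at most once, so
`J_{β₂}(t) ≤ β₂⁻¹` for `t ∈ (0,1)`; with `β₁ < β₂` and `t = T_{β₁}(1) = {β₁} ∈ (0,1)` this
contradicts `J_{β₁}(t) ≥ β₁⁻¹`.
-/

open MeasureTheory Filter Set Topology

/-- The orbit of `1` under the β-transformation: `betaOrb β 0 = 1`,
`betaOrb β (n+1) = β * betaOrb β n (mod 1)`. -/
noncomputable def betaOrb (β : ℝ) : ℕ → ℝ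
  | 0 => 1
  | n + 1 => Int.fract (β * betaOrb β n)

/-- The unnormalized density `h_β(x) = Σ_{n ≥ 0, T_β^n(1) > x} β^{-n}`. -/
noncomputable def hBeta (β : ℝ) (x : ℝ) : ℝ :=
  ∑' n : ℕ, if x < betaOrb β n then (β ^ n)⁻¹ else 0

/-- The normalization constant `K_β = Σ_{n ≥ 0} T_β^n(1) / β^n`. -/
noncomputable def KBeta (β : ℝ) : ℝ :=
  ∑' n : ℕ, betaOrb β n / β ^ n

/-- The Rényi–Parry measure: density `h_β / K_β` w.r.t. Lebesgue measure on `[0,1)`. -/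
noncomputable def nuBeta (β : ℝ) : Measure ℝ :=
  (volume.restrict (Set.Ico (0 : ℝ) 1)).withDensity
    (fun x => ENNReal.ofReal (hBeta β x / KBeta β))

lemma nhdsWithin_inf_ae_neBot {X : Type*} [TopologicalSpace X] [MeasurableSpace X]
    (μ : Measure X) [μ.IsOpenPosMeasure] {s : Set X} (hs : IsOpen s) (x : X)
    [(𝓝[s] x).NeBot] : (𝓝[s] x ⊓ ae μ).NeBot := by
  refine inf_neBot_iff.2 fun u hu v hv => ?_
  obtain ⟨o, ho, hxo, hos⟩ := mem_nhdsWithin.1 hu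
  have hne : (s ∩ o).Nonempty := Filter.nonempty_of_mem (inter_mem_nhdsWithin s (ho.mem_nhds hxo))
  by_contra hempty
  have hsub : s ∩ o ⊆ vᶜ := fun y hy hyv => hempty ⟨y, hos ⟨hy.2, hy.1⟩, hyv⟩
  exact (hs.inter ho).measure_ne_zero μ hne (measure_mono_null hsub (mem_ae_iff.1 hv))

lemma eq_of_tendsto_of_ae_restrict_eq {X Y : Type*} [MeasurableSpace X] [TopologicalSpace Y]
    [T2Space Y] {μ : Measure X} {s : Set X} {l : Filter X} [(l ⊓ ae μ).NeBot]
    {f g : X → Y} {a b : Y} (hs : MeasurableSet s) (hl : ∀ᶠ x in l, x ∈ s)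
    (hfg : f =ᵐ[μ.restrict s] g) (hf : Tendsto f l (𝓝 a)) (hg : Tendsto g l (𝓝 b)) :
    a = b := by
  have heq : f =ᶠ[l ⊓ ae μ] g :=
    (hl.filter_mono inf_le_left).mp <|
      ((ae_restrict_iff' hs).1 hfg).filter_mono inf_le_right |>.mono fun _ h hx => h hx
  exact tendsto_nhds_unique ((hf.mono_left inf_le_left).congr' heq) (hg.mono_left inf_le_left)

section StepSum

variable {a w : ℕ → ℝ}

lemma Summable.ite_zero (hw : Summable w) (p : ℕ → Prop) [DecidablePred p] :
    Summable fun n => if p n then w n else 0 :=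
  (hw.indicator {n | p n}).congr fun n => by simp [Set.indicator_apply]

lemma antitone_tsum_ite_lt (hw : Summable w) (hw0 : ∀ n, 0 ≤ w n) :
    Antitone fun x : ℝ => ∑' n, if x < a n then w n else 0 := by
  intro x y hxy
  refine Summable.tsum_le_tsum (fun n => ?_) (hw.ite_zero _) (hw.ite_zero _)
  by_cases hy : y < a n
  · simp [hy, hxy.trans_lt hy]
  · by_cases hx : x < a n <;> simp [hx, hy, hw0 n]

lemma tendsto_tsum_ite_lt_nhdsGT (hw : Summable w) (t : ℝ) :
    Tendsto (fun x => ∑' n, if x < a n then w n else 0) (𝓝[>] t)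
      (𝓝 (∑' n, if t < a n then w n else 0)) := by
  refine tendsto_tsum_of_dominated_convergence hw.abs (fun n => ?_)
    (Eventually.of_forall fun x n => ?_)
  · refine tendsto_const_nhds.congr' ?_
    by_cases h : t < a n
    · filter_upwards [Ioo_mem_nhdsGT h] with x hx
      simp [h, hx.2]
    · filter_upwards [self_mem_nhdsWithin] with x (hx : t < x)
      simp [h, not_lt.2 ((not_lt.1 h).trans hx.le)]
  · split_ifs <;> simp

lemma tendsto_tsum_ite_lt_nhdsLT (hw : Summable w) (t : ℝ) :
    Tendsto (fun x => ∑' n, if x < a n then w n else 0) (𝓝[<] t)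
      (𝓝 ((∑' n, if t < a n then w n else 0) + ∑' n, if a n = t then w n else 0)) := by
  rw [← (hw.ite_zero _).tsum_add (hw.ite_zero _)]
  refine tendsto_tsum_of_dominated_convergence hw.abs (fun n => ?_)
    (Eventually.of_forall fun x n => ?_)
  · refine tendsto_const_nhds.congr' ?_
    rcases lt_trichotomy t (a n) with h | h | h
    · filter_upwards [self_mem_nhdsWithin] with x (hx : x < t)
      simp [h, h.ne', hx.trans h]
    · filter_upwards [self_mem_nhdsWithin] with x (hx : x < t)
      rw [← h]
      simp [hx]
    · filter_upwards [Ioo_mem_nhdsLT h] with x hx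
      simp [h.ne, not_lt.2 h.le, not_lt.2 hx.1.le]
  · split_ifs <;> simp

end StepSum

section BetaOrbit

noncomputable def betaTransform (β x : ℝ) : ℝ := Int.fract (β * x)

lemma betaOrb_add (β : ℝ) (m : ℕ) : ∀ n, betaOrb β (m + n) = (betaTransform β)^[n] (betaOrb β m)
  | 0 => rfl
  | n + 1 => by
    rw [Function.iterate_succ_apply', ← betaOrb_add β m n]
    rfl

lemma betaOrb_nonneg (β : ℝ) : ∀ n, 0 ≤ betaOrb β n
  | 0 => zero_le_one
  | _ + 1 => Int.fract_nonneg _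

lemma betaOrb_le_one (β : ℝ) : ∀ n, betaOrb β n ≤ 1
  | 0 => le_rfl
  | _ + 1 => (Int.fract_lt_one _).le

lemma betaOrb_injOn_ne_zero {β : ℝ} {m : ℕ} (hm : betaOrb β m = 0) :
    InjOn (betaOrb β) {n | betaOrb β n ≠ 0} := by
  have hzero : ∀ k, m ≤ k → betaOrb β k = 0 := fun k hk => by
    obtain ⟨j, rfl⟩ := Nat.exists_eq_add_of_le hk
    rw [betaOrb_add, hm, Function.iterate_fixed (by simp [betaTransform])]
  -- an orbit point met twice is periodic, and its period can be pushed past `m`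
  suffices h : ∀ i j, i < j → betaOrb β i = betaOrb β j → betaOrb β i = 0 by
    intro i hi j hj hij
    by_contra hne
    rcases lt_or_gt_of_ne hne with hlt | hlt
    · exact hi (h i j hlt hij)
    · exact hj (h j i hlt hij.symm)
  intro i j hij heq
  have hper : Function.IsPeriodicPt (betaTransform β) (j - i) (betaOrb β i) := by
    rw [Function.IsPeriodicPt, Function.IsFixedPt, ← betaOrb_add, Nat.add_sub_cancel' hij.le, heq]
  rw [← (hper.mul_const m).eq, ← betaOrb_add]
  exact hzero _ (le_add_left (Nat.le_mul_of_pos_left m (Nat.sub_pos_of_lt hij)))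

end BetaOrbit

noncomputable def hBetaJump (β t : ℝ) : ℝ :=
  ∑' n : ℕ, if betaOrb β n = t then (β ^ n)⁻¹ else 0

section Density

variable {β : ℝ}

lemma summable_inv_pow (hβ : 1 < β) : Summable fun n : ℕ => (β ^ n)⁻¹ := by
  simpa only [inv_pow] using
    summable_geometric_of_lt_one (by positivity) (inv_lt_one_of_one_lt₀ hβ)

lemma hBeta_nonneg (hβ : 1 < β) (x : ℝ) : 0 ≤ hBeta β x :=
  tsum_nonneg fun n => by split_ifs <;> positivity

lemma hBeta_antitone (hβ : 1 < β) : Antitone (hBeta β) :=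
  antitone_tsum_ite_lt (summable_inv_pow hβ) fun n => by positivity

lemma tendsto_hBeta_nhdsGT (hβ : 1 < β) (t : ℝ) :
    Tendsto (hBeta β) (𝓝[>] t) (𝓝 (hBeta β t)) :=
  tendsto_tsum_ite_lt_nhdsGT (summable_inv_pow hβ) t

lemma tendsto_hBeta_nhdsLT (hβ : 1 < β) (t : ℝ) :
    Tendsto (hBeta β) (𝓝[<] t) (𝓝 (hBeta β t + hBetaJump β t)) :=
  tendsto_tsum_ite_lt_nhdsLT (summable_inv_pow hβ) t

lemma hBeta_one : hBeta β 1 = 0 := by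
  simp [hBeta, not_lt.2 (betaOrb_le_one β _)]

lemma hBetaJump_one : hBetaJump β 1 = 1 := by
  rw [hBetaJump, tsum_eq_single 0 fun n hn => if_neg ?_]
  · simp [betaOrb]
  · obtain ⟨k, rfl⟩ := Nat.exists_eq_succ_of_ne_zero hn
    exact (Int.fract_lt_one _).ne

lemma KBeta_pos (hβ : 1 < β) : 0 < KBeta β := by
  have hs : Summable fun n : ℕ => betaOrb β n / β ^ n :=
    (summable_inv_pow hβ).of_nonneg_of_le (fun n => div_nonneg (betaOrb_nonneg β n) (by positivity))
      fun n => by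
        rw [div_eq_mul_inv]
        exact mul_le_of_le_one_left (by positivity) (betaOrb_le_one β n)
  have h0 := hs.le_tsum 0 fun n _ => div_nonneg (betaOrb_nonneg β n) (by positivity)
  simp only [betaOrb, pow_zero, div_one] at h0
  exact one_pos.trans_le h0

lemma hBeta_zero (hβ : 1 < β) (h : ¬ ∃ n : ℕ, 1 ≤ n ∧ betaOrb β n = 0) :
    hBeta β 0 = (1 - β⁻¹)⁻¹ := by
  have hpos : ∀ n, 0 < betaOrb β n := fun
    | 0 => one_pos
    | n + 1 => (betaOrb_nonneg β _).lt_of_ne fun h0 => h ⟨n + 1, n.succ_pos, h0.symm⟩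
  simp only [hBeta, hpos, if_true, ← inv_pow]
  exact tsum_geometric_of_lt_one (by positivity) (inv_lt_one_of_one_lt₀ hβ)

lemma inv_pow_le_hBetaJump (hβ : 1 < β) (n : ℕ) : (β ^ n)⁻¹ ≤ hBetaJump β (betaOrb β n) := by
  have h := ((summable_inv_pow hβ).ite_zero fun k => betaOrb β k = betaOrb β n).le_tsum n
    fun k _ => by split_ifs <;> positivity
  rwa [if_pos rfl] at h

lemma hBetaJump_le_inv (hβ : 1 < β) {m : ℕ} (hm : betaOrb β m = 0) {t : ℝ} (ht0 : t ≠ 0)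
    (ht1 : t ≠ 1) : hBetaJump β t ≤ β⁻¹ := by
  by_cases ht : ∃ k, betaOrb β k = t
  · obtain ⟨k, hk⟩ := ht
    have hk0 : k ≠ 0 := by
      rintro rfl
      exact ht1 hk.symm
    have hJ : hBetaJump β t = (β ^ k)⁻¹ := by
      refine (tsum_eq_single k fun n hn => if_neg fun hn' => hn ?_).trans (if_pos hk)
      exact betaOrb_injOn_ne_zero hm (by simpa [hn'] using ht0) (by simpa [hk] using ht0)
        (hn'.trans hk.symm)
    rw [hJ]
    exact inv_anti₀ (by positivity) (le_self_pow₀ hβ.le hk0)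
  · simp only [not_exists] at ht
    have hJ : hBetaJump β t = 0 := by simp [hBetaJump, ht]
    rw [hJ]
    positivity

end Density

section RenyiParry

variable {β₁ β₂ : ℝ}

lemma hBeta_div_ae_eq_of_nuBeta_eq (hβ₁ : 1 < β₁) (hβ₂ : 1 < β₂) (hν : nuBeta β₁ = nuBeta β₂) :
    (fun x => hBeta β₁ x / KBeta β₁) =ᵐ[volume.restrict (Ico 0 1)]
      fun x => hBeta β₂ x / KBeta β₂ := by
  have hmeas : ∀ {β : ℝ}, 1 < β → AEMeasurable (fun x => ENNReal.ofReal (hBeta β x / KBeta β))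
      (volume.restrict (Ico 0 1)) := fun hβ =>
    ((hBeta_antitone hβ).measurable.div_const _).ennreal_ofReal.aemeasurable
  have hnonneg : ∀ {β : ℝ}, 1 < β → ∀ x, 0 ≤ hBeta β x / KBeta β := fun hβ x =>
    div_nonneg (hBeta_nonneg hβ x) (KBeta_pos hβ).le
  filter_upwards [(withDensity_eq_iff_of_sigmaFinite (hmeas hβ₁) (hmeas hβ₂)).1 hν] with x hx
  exact (ENNReal.ofReal_eq_ofReal_iff (hnonneg hβ₁ x) (hnonneg hβ₂ x)).1 hx

lemma hBeta_div_eq_of_nuBeta_eq (hβ₁ : 1 < β₁) (hβ₂ : 1 < β₂) (hν : nuBeta β₁ = nuBeta β₂)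
    {t : ℝ} (ht : t ∈ Ico 0 1) : hBeta β₁ t / KBeta β₁ = hBeta β₂ t / KBeta β₂ := by
  have := nhdsWithin_inf_ae_neBot volume (isOpen_Ioi : IsOpen (Ioi t)) t
  exact eq_of_tendsto_of_ae_restrict_eq measurableSet_Ico (Ico_mem_nhdsGT_of_mem ht)
    (hBeta_div_ae_eq_of_nuBeta_eq hβ₁ hβ₂ hν) ((tendsto_hBeta_nhdsGT hβ₁ t).div_const _)
    ((tendsto_hBeta_nhdsGT hβ₂ t).div_const _)

lemma hBeta_add_hBetaJump_div_eq_of_nuBeta_eq (hβ₁ : 1 < β₁) (hβ₂ : 1 < β₂)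
    (hν : nuBeta β₁ = nuBeta β₂) {t : ℝ} (ht : t ∈ Ioc 0 1) :
    (hBeta β₁ t + hBetaJump β₁ t) / KBeta β₁ = (hBeta β₂ t + hBetaJump β₂ t) / KBeta β₂ := by
  have := nhdsWithin_inf_ae_neBot volume (isOpen_Iio : IsOpen (Iio t)) t
  exact eq_of_tendsto_of_ae_restrict_eq measurableSet_Ico (Ico_mem_nhdsLT_of_mem ht)
    (hBeta_div_ae_eq_of_nuBeta_eq hβ₁ hβ₂ hν) ((tendsto_hBeta_nhdsLT hβ₁ t).div_const _)
    ((tendsto_hBeta_nhdsLT hβ₂ t).div_const _)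

lemma KBeta_eq_of_nuBeta_eq (hβ₁ : 1 < β₁) (hβ₂ : 1 < β₂) (hν : nuBeta β₁ = nuBeta β₂) :
    KBeta β₁ = KBeta β₂ := by
  simpa [hBeta_one, hBetaJump_one] using
    hBeta_add_hBetaJump_div_eq_of_nuBeta_eq hβ₁ hβ₂ hν ⟨one_pos, le_rfl⟩

lemma hBeta_eq_of_nuBeta_eq (hβ₁ : 1 < β₁) (hβ₂ : 1 < β₂) (hν : nuBeta β₁ = nuBeta β₂)
    {t : ℝ} (ht : t ∈ Ico 0 1) : hBeta β₁ t = hBeta β₂ t := by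
  have h := hBeta_div_eq_of_nuBeta_eq hβ₁ hβ₂ hν ht
  rwa [KBeta_eq_of_nuBeta_eq hβ₁ hβ₂ hν, div_left_inj' (KBeta_pos hβ₂).ne'] at h

lemma hBetaJump_eq_of_nuBeta_eq (hβ₁ : 1 < β₁) (hβ₂ : 1 < β₂) (hν : nuBeta β₁ = nuBeta β₂)
    {t : ℝ} (ht : t ∈ Ioo 0 1) : hBetaJump β₁ t = hBetaJump β₂ t := by
  have h := hBeta_add_hBetaJump_div_eq_of_nuBeta_eq hβ₁ hβ₂ hν (Ioo_subset_Ioc_self ht)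
  rwa [KBeta_eq_of_nuBeta_eq hβ₁ hβ₂ hν, div_left_inj' (KBeta_pos hβ₂).ne',
    hBeta_eq_of_nuBeta_eq hβ₁ hβ₂ hν (Ioo_subset_Ico_self ht), add_right_inj] at h

lemma not_exists_betaOrb_eq_zero_of_nuBeta_eq_of_lt (hβ₁ : 1 < β₁) (hlt : β₁ < β₂)
    (hni₁ : ¬ ∃ k : ℤ, β₁ = k) (hν : nuBeta β₁ = nuBeta β₂) :
    ¬ ∃ n : ℕ, 1 ≤ n ∧ betaOrb β₂ n = 0 := by
  rintro ⟨m, -, hm⟩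
  have hβ₂ := hβ₁.trans hlt
  have ht : betaOrb β₁ 1 ∈ Ioo 0 1 := by
    rw [show betaOrb β₁ 1 = Int.fract β₁ by simp [betaOrb]]
    exact ⟨Int.fract_pos.2 fun h => hni₁ ⟨_, h⟩, Int.fract_lt_one _⟩
  refine lt_irrefl β₁⁻¹ ?_
  calc β₁⁻¹ ≤ hBetaJump β₁ (betaOrb β₁ 1) := by simpa using inv_pow_le_hBetaJump hβ₁ 1
    _ = hBetaJump β₂ (betaOrb β₁ 1) := hBetaJump_eq_of_nuBeta_eq hβ₁ hβ₂ hν ht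
    _ ≤ β₂⁻¹ := hBetaJump_le_inv hβ₂ hm ht.1.ne' ht.2.ne
    _ < β₁⁻¹ := inv_strictAnti₀ (by positivity) hlt

end RenyiParry

theorem stmt_12 (β₁ β₂ : ℝ) (hβ₁ : 1 < β₁) (hβ₂ : 1 < β₂) (hne : β₁ ≠ β₂)
    (hni₁ : ¬ ∃ k : ℤ, β₁ = k) (hni₂ : ¬ ∃ k : ℤ, β₂ = k)
    (hν : nuBeta β₁ = nuBeta β₂) :
    Xor' (∃ n : ℕ, 1 ≤ n ∧ betaOrb β₁ n = 0) (∃ n : ℕ, 1 ≤ n ∧ betaOrb β₂ n = 0) := by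
  by_cases h₁ : ∃ n : ℕ, 1 ≤ n ∧ betaOrb β₁ n = 0 <;>
    by_cases h₂ : ∃ n : ℕ, 1 ≤ n ∧ betaOrb β₂ n = 0
  · rcases hne.lt_or_gt with hlt | hlt
    · exact absurd h₂ (not_exists_betaOrb_eq_zero_of_nuBeta_eq_of_lt hβ₁ hlt hni₁ hν)
    · exact absurd h₁ (not_exists_betaOrb_eq_zero_of_nuBeta_eq_of_lt hβ₂ hlt hni₂ hν.symm)
  · exact Or.inl ⟨h₁, h₂⟩
  · exact Or.inr ⟨h₂, h₁⟩
  · have h0 := hBeta_eq_of_nuBeta_eq hβ₁ hβ₂ hν ⟨le_rfl, one_pos⟩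
    rw [hBeta_zero hβ₁ h₁, hBeta_zero hβ₂ h₂, inv_inj, sub_right_inj, inv_inj] at h0
    exact absurd h0 hne
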